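/- arXiv:1411.0490 — 3 statements merged into one kernel-verified Lean document; each statement's English description precedes it below -/
import Mathlib

section
/- Well-formedness is preserved by reduction: if the configuration C is well-formed and C ⟶ C', then C' is well-formed. -/
/- A formalization of the Calculus of Collision-prone Communicating Processes (CCCP). -/

namespace CCCP

/-- Channels are represented by natural numbers. -/
abbrev Chan : Type := ℕ

/-- A channel environment maps each channel to an exposure time and a value. -/
abbrev ChanEnv (V : Type) : Type := Chan → ℕ × V

/-- Expressions: values and (de Bruijn) data variables. -/
inductive Exp (V : Type) : Type where
  | val (v : V)
  | var (i : ℕ)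

/-- Boolean expressions: equality tests and exposure checks. -/
inductive BExp (V : Type) : Type where
  | beq (e1 e2 : Exp V)
  | exposed (c : Chan)

/-- Station code (processes).  Data variables and process (recursion) variables
are in de Bruijn style: `rcv c P Q` binds data variable 0 in `P`, and `fix P`
binds process variable 0 in `P`. -/
inductive Proc (V : Type) : Type where
  | broadcast (c : Chan) (e : Exp V) (P : Proc V)  -- c!⟨e⟩.P
  | rcv (c : Chan) (P Q : Proc V)                  -- ⌊c?(x).P⌋Q
  | sigma (P : Proc V)                             -- σ.P
  | tau (P : Proc V)                               -- τ.P
  | sum (P Q : Proc V)                             -- P + Q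
  | mtch (b : BExp V) (P Q : Proc V)               -- [b]P,Q
  | pvar (X : ℕ)                                   -- process variable
  | nil                                            -- termination
  | fix (P : Proc V)                               -- recursion

/-- System terms.  `active c P` is an active receiver c(x).P which binds data
variable 0 in `P`; `res c n v W` is the channel restriction νc:(n,v).W. -/
inductive Sys (V : Type) : Type where
  | proc (P : Proc V)
  | active (c : Chan) (P : Proc V)
  | par (W1 W2 : Sys V)
  | res (c : Chan) (n : ℕ) (v : V) (W : Sys V)

variable {V : Type}

/-- Evaluation of closed expressions. -/
def Exp.eval : Exp V → Option V
  | .val v => some v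
  | .var _ => none

def Exp.liftD : Exp V → ℕ → Exp V
  | .val v, _ => .val v
  | .var i, k => if i < k then .var i else .var (i + 1)

def Exp.substD : Exp V → ℕ → V → Exp V
  | .val w, _, _ => .val w
  | .var i, j, v => if i = j then .val v else if j < i then .var (i - 1) else .var i

def BExp.liftD : BExp V → ℕ → BExp V
  | .beq e1 e2, k => .beq (e1.liftD k) (e2.liftD k)
  | .exposed c, _ => .exposed c

def BExp.substD : BExp V → ℕ → V → BExp V
  | .beq e1 e2, j, v => .beq (e1.substD j v) (e2.substD j v)
  | .exposed c, _, _ => .exposed c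

/-- Lifting of data variables (≥ k) in a process. -/
def Proc.liftD : Proc V → ℕ → Proc V
  | .broadcast c e P, k => .broadcast c (e.liftD k) (Proc.liftD P k)
  | .rcv c P Q, k => .rcv c (Proc.liftD P (k + 1)) (Proc.liftD Q k)
  | .sigma P, k => .sigma (Proc.liftD P k)
  | .tau P, k => .tau (Proc.liftD P k)
  | .sum P Q, k => .sum (Proc.liftD P k) (Proc.liftD Q k)
  | .mtch b P Q, k => .mtch (b.liftD k) (Proc.liftD P k) (Proc.liftD Q k)
  | .pvar X, _ => .pvar X
  | .nil, _ => .nil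
  | .fix P, k => .fix (Proc.liftD P k)

/-- Substitution of a (closed) value for data variable j in a process. -/
def Proc.substD : Proc V → ℕ → V → Proc V
  | .broadcast c e P, j, v => .broadcast c (e.substD j v) (Proc.substD P j v)
  | .rcv c P Q, j, v => .rcv c (Proc.substD P (j + 1) v) (Proc.substD Q j v)
  | .sigma P, j, v => .sigma (Proc.substD P j v)
  | .tau P, j, v => .tau (Proc.substD P j v)
  | .sum P Q, j, v => .sum (Proc.substD P j v) (Proc.substD Q j v)
  | .mtch b P Q, j, v => .mtch (b.substD j v) (Proc.substD P j v) (Proc.substD Q j v)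
  | .pvar X, _, _ => .pvar X
  | .nil, _, _ => .nil
  | .fix P, j, v => .fix (Proc.substD P j v)

/-- Lifting of process variables (≥ k) in a process. -/
def Proc.liftP : Proc V → ℕ → Proc V
  | .broadcast c e P, k => .broadcast c e (Proc.liftP P k)
  | .rcv c P Q, k => .rcv c (Proc.liftP P k) (Proc.liftP Q k)
  | .sigma P, k => .sigma (Proc.liftP P k)
  | .tau P, k => .tau (Proc.liftP P k)
  | .sum P Q, k => .sum (Proc.liftP P k) (Proc.liftP Q k)
  | .mtch b P Q, k => .mtch b (Proc.liftP P k) (Proc.liftP Q k)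
  | .pvar X, k => if X < k then .pvar X else .pvar (X + 1)
  | .nil, _ => .nil
  | .fix P, k => .fix (Proc.liftP P (k + 1))

/-- Substitution of a process S for process variable j (used for unfolding fix). -/
def Proc.substP : Proc V → ℕ → Proc V → Proc V
  | .broadcast c e P, j, S => .broadcast c e (Proc.substP P j S)
  | .rcv c P Q, j, S => .rcv c (Proc.substP P j (Proc.liftD S 0)) (Proc.substP Q j S)
  | .sigma P, j, S => .sigma (Proc.substP P j S)
  | .tau P, j, S => .tau (Proc.substP P j S)
  | .sum P Q, j, S => .sum (Proc.substP P j S) (Proc.substP Q j S)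
  | .mtch b P Q, j, S => .mtch b (Proc.substP P j S) (Proc.substP Q j S)
  | .pvar X, j, S => if X = j then S else if j < X then .pvar (X - 1) else .pvar X
  | .nil, _, _ => .nil
  | .fix P, j, S => .fix (Proc.substP P (j + 1) (Proc.liftP S 0))

/-- Iterated time-delay prefix σ^n.P -/
def Proc.sigmaIter : ℕ → Proc V → Proc V
  | 0, P => P
  | n + 1, P => .sigma (Proc.sigmaIter n P)

/-- Does the process contain an unguarded receiver listening on channel c? -/
def Proc.hasRcv : Proc V → Chan → Bool
  | .broadcast _ _ _, _ => false
  | .rcv d _ _, c => d == c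
  | .sigma _, _ => false
  | .tau _, _ => false
  | .sum P Q, c => Proc.hasRcv P c || Proc.hasRcv Q c
  | .mtch _ _ _, _ => false
  | .pvar _, _ => false
  | .nil, _ => false
  | .fix P, c => Proc.hasRcv P c

/-- Does the system term contain an unguarded receiver listening on channel c? -/
def Sys.hasRcv : Sys V → Chan → Bool
  | .proc P, c => P.hasRcv c
  | .active _ _, _ => false
  | .par W1 W2, c => Sys.hasRcv W1 c || Sys.hasRcv W2 c
  | .res d _ _ W, c => if d = c then false else Sys.hasRcv W c

/-- The predicate rcv(Γ ▷ W, c): channel c is idle in Γ and W contains an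
unguarded receiver actively awaiting a message on c. -/
def Isrcv (Γ : ChanEnv V) (W : Sys V) (c : Chan) : Prop :=
  (Γ c).1 = 0 ∧ W.hasRcv c = true

/- Closedness of terms: data variables < dk and process variables < pk. -/

def Exp.closedUnder : Exp V → ℕ → Bool
  | .val _, _ => true
  | .var i, dk => decide (i < dk)

def BExp.closedUnder : BExp V → ℕ → Bool
  | .beq e1 e2, dk => e1.closedUnder dk && e2.closedUnder dk
  | .exposed _, _ => true

def Proc.closedUnder : Proc V → ℕ → ℕ → Bool
  | .broadcast _ e P, dk, pk => e.closedUnder dk && Proc.closedUnder P dk pk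
  | .rcv _ P Q, dk, pk => Proc.closedUnder P (dk + 1) pk && Proc.closedUnder Q dk pk
  | .sigma P, dk, pk => Proc.closedUnder P dk pk
  | .tau P, dk, pk => Proc.closedUnder P dk pk
  | .sum P Q, dk, pk => Proc.closedUnder P dk pk && Proc.closedUnder Q dk pk
  | .mtch b P Q, dk, pk => b.closedUnder dk && Proc.closedUnder P dk pk && Proc.closedUnder Q dk pk
  | .pvar X, _, pk => decide (X < pk)
  | .nil, _, _ => true
  | .fix P, dk, pk => Proc.closedUnder P dk (pk + 1)

def Sys.closedUnder : Sys V → ℕ → ℕ → Bool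
  | .proc P, dk, pk => P.closedUnder dk pk
  | .active _ P, dk, pk => P.closedUnder (dk + 1) pk
  | .par W1 W2, dk, pk => Sys.closedUnder W1 dk pk && Sys.closedUnder W2 dk pk
  | .res _ _ _ W, dk, pk => Sys.closedUnder W dk pk

/-- Process variable k does not occur unguarded (i.e. every occurrence of k lies
under a time-consuming construct: broadcast, receiver, σ-prefix or matching). -/
def Proc.guardedVar : Proc V → ℕ → Bool
  | .broadcast _ _ _, _ => true
  | .rcv _ _ _, _ => true
  | .sigma _, _ => true
  | .tau P, k => Proc.guardedVar P k
  | .sum P Q, k => Proc.guardedVar P k && Proc.guardedVar Q k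
  | .mtch _ _ _, _ => true
  | .pvar X, k => X != k
  | .nil, _ => true
  | .fix P, k => Proc.guardedVar P (k + 1)

/-- Every recursion fix X.P in the term has its recursion variable guarded by a
time-consuming construct. -/
def Proc.wfRec : Proc V → Bool
  | .broadcast _ _ P => Proc.wfRec P
  | .rcv _ P Q => Proc.wfRec P && Proc.wfRec Q
  | .sigma P => Proc.wfRec P
  | .tau P => Proc.wfRec P
  | .sum P Q => Proc.wfRec P && Proc.wfRec Q
  | .mtch _ P Q => Proc.wfRec P && Proc.wfRec Q
  | .pvar _ => true
  | .nil => true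
  | .fix P => Proc.wfRec P && Proc.guardedVar P 0

def Sys.wfRec : Sys V → Bool
  | .proc P => P.wfRec
  | .active _ P => P.wfRec
  | .par W1 W2 => Sys.wfRec W1 && Sys.wfRec W2
  | .res _ _ _ W => Sys.wfRec W

/-- A legal system term: closed, and all recursion variables guarded. -/
def Sys.proper (W : Sys V) : Prop :=
  W.closedUnder 0 0 = true ∧ W.wfRec = true

/- Free channel occurrences. -/

def BExp.usesChan : BExp V → Chan → Bool
  | .beq _ _, _ => false
  | .exposed d, c => d == c

def Proc.freeChan : Proc V → Chan → Bool
  | .broadcast d _ P, c => d == c || Proc.freeChan P c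
  | .rcv d P Q, c => d == c || Proc.freeChan P c || Proc.freeChan Q c
  | .sigma P, c => Proc.freeChan P c
  | .tau P, c => Proc.freeChan P c
  | .sum P Q, c => Proc.freeChan P c || Proc.freeChan Q c
  | .mtch b P Q, c => b.usesChan c || Proc.freeChan P c || Proc.freeChan Q c
  | .pvar _, _ => false
  | .nil, _ => false
  | .fix P, c => Proc.freeChan P c

def Sys.freeChan : Sys V → Chan → Bool
  | .proc P, c => P.freeChan c
  | .active d P, c => d == c || P.freeChan c
  | .par W1 W2, c => Sys.freeChan W1 c || Sys.freeChan W2 c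
  | .res d _ _ W, c => if d = c then false else Sys.freeChan W c

/-- Labels of the intensional semantics. -/
inductive Label (V : Type) : Type where
  | out (c : Chan) (v : V)    -- c!v
  | inp (c : Chan) (v : V)    -- c?v
  | tau
  | sigma

def Label.usesChan : Label V → Chan → Prop
  | .out d _, c => d = c
  | .inp d _, c => d = c
  | .tau, _ => False
  | .sigma, _ => False

/-- Updating a channel environment at channel c upon a broadcast (or input) of
value v: this models collisions. -/
def updBcast (errv : V) (δ : V → ℕ) (Γ : ChanEnv V) (c : Chan) (v : V) : ChanEnv V :=
  fun d => if d = c then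
      (if (Γ c).1 = 0 then (δ v, v) else (max (δ v) (Γ c).1, errv))
    else Γ d

/-- The channel-environment update upd_λ(Γ). -/
def updL (errv : V) (δ : V → ℕ) : Label V → ChanEnv V → ChanEnv V
  | .out c v, Γ => updBcast errv δ Γ c v
  | .inp c v, Γ => updBcast errv δ Γ c v
  | .tau, Γ => Γ
  | .sigma, Γ => fun c => ((Γ c).1 - 1, (Γ c).2)

/-- Γ[c ↦ p] -/
def updEnv (Γ : ChanEnv V) (c : Chan) (p : ℕ × V) : ChanEnv V :=
  fun d => if d = c then p else Γ d

/-- Evaluation of (closed) boolean expressions relative to a channel environment. -/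
inductive BEval (Γ : ChanEnv V) : BExp V → Bool → Prop where
  | beqT {e1 e2 : Exp V} {v : V} :
      e1.eval = some v → e2.eval = some v → BEval Γ (.beq e1 e2) true
  | beqF {e1 e2 : Exp V} {v1 v2 : V} :
      e1.eval = some v1 → e2.eval = some v2 → v1 ≠ v2 → BEval Γ (.beq e1 e2) false
  | expT {c : Chan} : 0 < (Γ c).1 → BEval Γ (.exposed c) true
  | expF {c : Chan} : (Γ c).1 = 0 → BEval Γ (.exposed c) false

/-- The intensional semantics of CCCP: Γ ▷ W --λ--> W'.
Parameters: `errv` is the error value, `δ` gives the transmission time of values. -/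
inductive Step (errv : V) (δ : V → ℕ) : ChanEnv V → Sys V → Label V → Sys V → Prop where
  -- (Snd)
  | snd {Γ : ChanEnv V} {c : Chan} {e : Exp V} {v : V} {P : Proc V} :
      e.eval = some v →
      Step errv δ Γ (.proc (.broadcast c e P)) (.out c v) (.proc (Proc.sigmaIter (δ v) P))
  -- (Rcv)
  | rcv {Γ : ChanEnv V} {c : Chan} {P Q : Proc V} {v : V} :
      (Γ c).1 = 0 →
      Step errv δ Γ (.proc (.rcv c P Q)) (.inp c v) (.active c P)
  -- (RcvIgn)
  | rcvIgn {Γ : ChanEnv V} {W : Sys V} {c : Chan} {v : V} :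
      ¬ Isrcv Γ W c →
      Step errv δ Γ W (.inp c v) W
  -- (Sync) and its symmetric counterpart
  | sync {Γ : ChanEnv V} {W1 W2 W1' W2' : Sys V} {c : Chan} {v : V} :
      Step errv δ Γ W1 (.out c v) W1' → Step errv δ Γ W2 (.inp c v) W2' →
      Step errv δ Γ (.par W1 W2) (.out c v) (.par W1' W2')
  | syncR {Γ : ChanEnv V} {W1 W2 W1' W2' : Sys V} {c : Chan} {v : V} :
      Step errv δ Γ W1 (.inp c v) W1' → Step errv δ Γ W2 (.out c v) W2' →
      Step errv δ Γ (.par W1 W2) (.out c v) (.par W1' W2')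
  -- (RcvPar)
  | rcvPar {Γ : ChanEnv V} {W1 W2 W1' W2' : Sys V} {c : Chan} {v : V} :
      Step errv δ Γ W1 (.inp c v) W1' → Step errv δ Γ W2 (.inp c v) W2' →
      Step errv δ Γ (.par W1 W2) (.inp c v) (.par W1' W2')
  -- (TimeNil)
  | timeNil {Γ : ChanEnv V} :
      Step errv δ Γ (.proc .nil) .sigma (.proc .nil)
  -- (Sleep)
  | sleep {Γ : ChanEnv V} {P : Proc V} :
      Step errv δ Γ (.proc (.sigma P)) .sigma (.proc P)
  -- (ActRcv)
  | actRcv {Γ : ChanEnv V} {c : Chan} {P : Proc V} :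
      1 < (Γ c).1 →
      Step errv δ Γ (.active c P) .sigma (.active c P)
  -- (EndRcv)
  | endRcv {Γ : ChanEnv V} {c : Chan} {P : Proc V} {w : V} :
      (Γ c).1 = 1 → (Γ c).2 = w →
      Step errv δ Γ (.active c P) .sigma (.proc (Proc.substD P 0 w))
  -- (Timeout)
  | timeout {Γ : ChanEnv V} {c : Chan} {P Q : Proc V} :
      (Γ c).1 = 0 →
      Step errv δ Γ (.proc (.rcv c P Q)) .sigma (.proc Q)
  -- (RcvLate)
  | rcvLate {Γ : ChanEnv V} {c : Chan} {P Q : Proc V} :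
      0 < (Γ c).1 →
      Step errv δ Γ (.proc (.rcv c P Q)) .tau (.active c (Proc.liftD (Proc.substD P 0 errv) 0))
  -- (Tau)
  | tauStep {Γ : ChanEnv V} {P : Proc V} :
      Step errv δ Γ (.proc (.tau P)) .tau (.proc P)
  -- (Then)
  | thenB {Γ : ChanEnv V} {b : BExp V} {P Q : Proc V} :
      BEval Γ b true →
      Step errv δ Γ (.proc (.mtch b P Q)) .tau (.proc (.sigma P))
  -- (Else)
  | elseB {Γ : ChanEnv V} {b : BExp V} {P Q : Proc V} :
      BEval Γ b false →
      Step errv δ Γ (.proc (.mtch b P Q)) .tau (.proc (.sigma Q))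
  -- (TimePar)
  | timePar {Γ : ChanEnv V} {W1 W2 W1' W2' : Sys V} :
      Step errv δ Γ W1 .sigma W1' → Step errv δ Γ W2 .sigma W2' →
      Step errv δ Γ (.par W1 W2) .sigma (.par W1' W2')
  -- (TauPar) and its symmetric counterpart
  | tauParL {Γ : ChanEnv V} {W1 W2 W1' : Sys V} :
      Step errv δ Γ W1 .tau W1' →
      Step errv δ Γ (.par W1 W2) .tau (.par W1' W2)
  | tauParR {Γ : ChanEnv V} {W1 W2 W2' : Sys V} :
      Step errv δ Γ W2 .tau W2' →
      Step errv δ Γ (.par W1 W2) .tau (.par W1 W2')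
  -- (Rec)
  | recS {Γ : ChanEnv V} {P : Proc V} {lam : Label V} {W : Sys V} :
      Step errv δ Γ (.proc (Proc.substP P 0 (.fix P))) lam W →
      Step errv δ Γ (.proc (.fix P)) lam W
  -- (Sum) and its symmetric counterpart
  | sumL {Γ : ChanEnv V} {P Q : Proc V} {lam : Label V} {W : Sys V} :
      Step errv δ Γ (.proc P) lam W → (lam = .tau ∨ ∃ c v, lam = .out c v) →
      Step errv δ Γ (.proc (.sum P Q)) lam W
  | sumR {Γ : ChanEnv V} {P Q : Proc V} {lam : Label V} {W : Sys V} :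
      Step errv δ Γ (.proc Q) lam W → (lam = .tau ∨ ∃ c v, lam = .out c v) →
      Step errv δ Γ (.proc (.sum P Q)) lam W
  -- (SumTime)
  | sumTime {Γ : ChanEnv V} {P Q P' Q' : Proc V} :
      Step errv δ Γ (.proc P) .sigma (.proc P') → Step errv δ Γ (.proc Q) .sigma (.proc Q') →
      Step errv δ Γ (.proc (.sum P Q)) .sigma (.proc (.sum P' Q'))
  -- (SumRcv) and its symmetric counterpart
  | sumRcvL {Γ : ChanEnv V} {P Q : Proc V} {c : Chan} {v : V} {W : Sys V} :
      Step errv δ Γ (.proc P) (.inp c v) W → Isrcv Γ (.proc P) c →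
      Step errv δ Γ (.proc (.sum P Q)) (.inp c v) W
  | sumRcvR {Γ : ChanEnv V} {P Q : Proc V} {c : Chan} {v : V} {W : Sys V} :
      Step errv δ Γ (.proc Q) (.inp c v) W → Isrcv Γ (.proc Q) c →
      Step errv δ Γ (.proc (.sum P Q)) (.inp c v) W
  -- (ResI)
  | resI {Γ : ChanEnv V} {c : Chan} {n : ℕ} {v w : V} {W W' : Sys V} :
      Step errv δ (updEnv Γ c (n, v)) W (.out c w) W' →
      Step errv δ Γ (.res c n v W) .tau
        (.res c (updBcast errv δ (updEnv Γ c (n, v)) c w c).1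
                (updBcast errv δ (updEnv Γ c (n, v)) c w c).2 W')
  -- (ResV)
  | resV {Γ : ChanEnv V} {c : Chan} {n : ℕ} {v : V} {W W' : Sys V} {lam : Label V} :
      Step errv δ (updEnv Γ c (n, v)) W lam W' →
      ¬ lam.usesChan c → lam ≠ .sigma →
      Step errv δ Γ (.res c n v W) lam (.res c n v W')
  -- time passage under restriction
  | resT {Γ : ChanEnv V} {c : Chan} {n : ℕ} {v : V} {W W' : Sys V} :
      Step errv δ (updEnv Γ c (n, v)) W .sigma W' →
      Step errv δ Γ (.res c n v W) .sigma (.res c (n - 1) v W')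

/-- Configurations. -/
abbrev Config (V : Type) : Type := ChanEnv V × Sys V

/-- Instantaneous reductions (broadcast or internal step). -/
def RedI (errv : V) (δ : V → ℕ) (C C' : Config V) : Prop :=
  (Step errv δ C.1 C.2 .tau C'.2 ∧ C'.1 = C.1) ∨
  (∃ c v, Step errv δ C.1 C.2 (.out c v) C'.2 ∧ C'.1 = updBcast errv δ C.1 c v)

/-- Timed reductions. -/
def RedT (errv : V) (δ : V → ℕ) (C C' : Config V) : Prop :=
  Step errv δ C.1 C.2 .sigma C'.2 ∧ C'.1 = updL errv δ .sigma C.1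

/-- Reductions of configurations. -/
def Red (errv : V) (δ : V → ℕ) (C C' : Config V) : Prop :=
  RedI errv δ C C' ∨ RedT errv δ C C'

def RedStar (errv : V) (δ : V → ℕ) : Config V → Config V → Prop :=
  Relation.ReflTransGen (Red errv δ)

def RedIStar (errv : V) (δ : V → ℕ) : Config V → Config V → Prop :=
  Relation.ReflTransGen (RedI errv δ)

/-- Iteration of a relation a fixed number of times. -/
def relPow {α : Type _} (r : α → α → Prop) : ℕ → α → α → Prop
  | 0 => Eq
  | n + 1 => fun a c => ∃ b, r a b ∧ relPow r n b c

/-- Strong barb: channel c is exposed. -/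
def Barb (C : Config V) (c : Chan) : Prop := 0 < (C.1 c).1

/-- Weak barb. -/
def WBarb (errv : V) (δ : V → ℕ) (C : Config V) (c : Chan) : Prop :=
  ∃ C', RedStar errv δ C C' ∧ Barb C' c

/-- Extensional actions. -/
inductive Act (V : Type) : Type where
  | inp (c : Chan) (v : V)     -- c?v
  | time                       -- σ
  | tauA                       -- τ
  | deliver (c : Chan) (v : V) -- γ(c,v)
  | idle (c : Chan)            -- ι(c)

/-- The extensional LTS over configurations. -/
inductive EStep (errv : V) (δ : V → ℕ) : Config V → Act V → Config V → Prop where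
  | einp {Γ : ChanEnv V} {W W' : Sys V} {c : Chan} {v : V} :
      Step errv δ Γ W (.inp c v) W' →
      EStep errv δ (Γ, W) (.inp c v) (updBcast errv δ Γ c v, W')
  | etime {Γ : ChanEnv V} {W W' : Sys V} :
      Step errv δ Γ W .sigma W' →
      EStep errv δ (Γ, W) .time (updL errv δ .sigma Γ, W')
  | eshh {Γ : ChanEnv V} {W W' : Sys V} {c : Chan} {v : V} :
      Step errv δ Γ W (.out c v) W' →
      EStep errv δ (Γ, W) .tauA (updBcast errv δ Γ c v, W')
  | etau {Γ : ChanEnv V} {W W' : Sys V} :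
      Step errv δ Γ W .tau W' →
      EStep errv δ (Γ, W) .tauA (Γ, W')
  | edeliver {Γ : ChanEnv V} {W W' : Sys V} {c : Chan} {v : V} :
      Γ c = (1, v) → Step errv δ Γ W .sigma W' →
      EStep errv δ (Γ, W) (.deliver c v) (updL errv δ .sigma Γ, W')
  | eidle {Γ : ChanEnv V} {W : Sys V} {c : Chan} :
      (Γ c).1 = 0 →
      EStep errv δ (Γ, W) (.idle c) (Γ, W)

/-- Weak internal moves ⟹. -/
def TauStar (errv : V) (δ : V → ℕ) : Config V → Config V → Prop :=
  Relation.ReflTransGen (fun C C' => EStep errv δ C .tauA C')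

/-- Weak extensional action C ⟹α⟹ C'. -/
def WStep (errv : V) (δ : V → ℕ) (C : Config V) (α : Act V) (C' : Config V) : Prop :=
  ∃ C1 C2, TauStar errv δ C C1 ∧ EStep errv δ C1 α C2 ∧ TauStar errv δ C2 C'

/-- C ⟹α̂⟹ C'. -/
def WHat (errv : V) (δ : V → ℕ) (C : Config V) (α : Act V) (C' : Config V) : Prop :=
  match α with
  | .tauA => TauStar errv δ C C'
  | _ => WStep errv δ C α C'

/-- (Weak) bisimulations on the extensional LTS. -/
def IsBisim (errv : V) (δ : V → ℕ) (R : Config V → Config V → Prop) : Prop :=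
  Symmetric R ∧
  ∀ C1 C2, R C1 C2 → ∀ (α : Act V) C1', EStep errv δ C1 α C1' →
    ∃ C2', WHat errv δ C2 α C2' ∧ R C1' C2'

/-- Weak bisimilarity ≈. -/
def Bisim (errv : V) (δ : V → ℕ) (C1 C2 : Config V) : Prop :=
  ∃ R, IsBisim errv δ R ∧ R C1 C2

/-- Barb-preserving relations. -/
def BarbPreserving (errv : V) (δ : V → ℕ) (R : Config V → Config V → Prop) : Prop :=
  ∀ C1 C2, R C1 C2 → ∀ c, WBarb errv δ C1 c → WBarb errv δ C2 c

/-- Reduction-closed relations. -/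
def ReductionClosed (errv : V) (δ : V → ℕ) (R : Config V → Config V → Prop) : Prop :=
  ∀ C1 C2, R C1 C2 → ∀ C1', Red errv δ C1 C1' →
    ∃ C2', RedStar errv δ C2 C2' ∧ R C1' C2'

/-- Contextual relations. -/
def Contextual (R : Config V → Config V → Prop) : Prop :=
  ∀ Γ1 W1 Γ2 W2, R (Γ1, W1) (Γ2, W2) →
    ∀ W : Sys V, W.proper → R (Γ1, .par W1 W) (Γ2, .par W2 W)

/-- Reduction barbed congruence ≃: the largest symmetric, barb-preserving,
reduction-closed and contextual relation. -/
def RBC (errv : V) (δ : V → ℕ) (C1 C2 : Config V) : Prop :=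
  ∃ R, Symmetric R ∧ BarbPreserving errv δ R ∧ ReductionClosed errv δ R ∧
    Contextual R ∧ R C1 C2

/-- Well-formed configurations. -/
inductive WF : ChanEnv V → Sys V → Prop where
  | wfProc {Γ : ChanEnv V} (P : Proc V) : WF Γ (.proc P)
  | wfActive {Γ : ChanEnv V} {c : Chan} (P : Proc V) : 0 < (Γ c).1 → WF Γ (.active c P)
  | wfPar {Γ : ChanEnv V} {W1 W2 : Sys V} : WF Γ W1 → WF Γ W2 → WF Γ (.par W1 W2)
  | wfRes {Γ : ChanEnv V} {c : Chan} {n : ℕ} {v : V} {W : Sys V} :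
      WF (updEnv Γ c (n, v)) W → WF Γ (.res c n v W)

/-- Comparison of channel environments: Γ ≤ Γ'. -/
def EnvLE (Γ Γ' : ChanEnv V) : Prop := ∀ c : Chan, (Γ c).1 ≤ (Γ' c).1

/-! Well-formedness only asks active receivers to listen on exposed channels. Broadcasts never
decrease exposure, a receiver becomes active exactly when a transmission of length `δ v ≥ 1`
starts, and a σ-step keeps it active only if the exposure exceeded 1, so it stays positive
(ActRcv). Under a restriction `νc` the environment update commutes with rebinding `c`,
since the label does not mention `c` (ResV), or is absorbed by the new binding (ResI, time). -/

variable {errv : V} {δ : V → ℕ}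

theorem EnvLE.updEnv {Γ Γ' : ChanEnv V} (h : EnvLE Γ Γ') (c : Chan) (p : ℕ × V) :
    EnvLE (updEnv Γ c p) (updEnv Γ' c p) := by
  intro d
  unfold CCCP.updEnv
  split_ifs
  exacts [le_rfl, h d]

theorem envLE_updBcast (Γ : ChanEnv V) (c : Chan) (v : V) :
    EnvLE Γ (updBcast errv δ Γ c v) := by
  intro d
  unfold updBcast
  split_ifs with hd h0
  · subst hd; omega
  · subst hd; exact le_max_right _ _
  · exact le_rfl

theorem WF.mono {Γ Γ' : ChanEnv V} {W : Sys V} (hwf : WF Γ W) (hle : EnvLE Γ Γ') : WF Γ' W := by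
  induction hwf generalizing Γ' with
  | wfProc P => exact .wfProc P
  | wfActive P h => exact .wfActive P (h.trans_le (hle _))
  | wfPar _ _ ih1 ih2 => exact .wfPar (ih1 hle) (ih2 hle)
  | wfRes _ ih => exact .wfRes (ih (hle.updEnv _ _))

theorem updBcast_self_fst_pos_of_idle {Γ : ChanEnv V} {c : Chan} (v : V) (hv : 1 ≤ δ v)
    (h0 : (Γ c).1 = 0) : 0 < (updBcast errv δ Γ c v c).1 := by
  simp only [updBcast, h0, if_true]
  exact hv

theorem updBcast_updEnv_of_ne (Γ : ChanEnv V) {c d : Chan} (p : ℕ × V) (w : V) (hdc : d ≠ c) :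
    updBcast errv δ (updEnv Γ c p) d w = updEnv (updBcast errv δ Γ d w) c p := by
  funext e
  unfold updBcast updEnv
  by_cases hed : e = d
  · subst hed; simp [hdc]
  · by_cases hec : e = c <;> simp [hed, hec, Ne.symm hdc]

theorem updL_updEnv_of_not_usesChan (Γ : ChanEnv V) {c : Chan} (p : ℕ × V) {lam : Label V}
    (hc : ¬ lam.usesChan c) (hσ : lam ≠ .sigma) :
    updL errv δ lam (updEnv Γ c p) = updEnv (updL errv δ lam Γ) c p := by
  cases lam with
  | out d w => exact updBcast_updEnv_of_ne Γ p w hc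
  | inp d w => exact updBcast_updEnv_of_ne Γ p w hc
  | tau => rfl
  | sigma => exact absurd rfl hσ

theorem updEnv_updBcast_self (Γ : ChanEnv V) (c : Chan) (p : ℕ × V) (w : V) :
    updEnv Γ c (updBcast errv δ (updEnv Γ c p) c w c) = updBcast errv δ (updEnv Γ c p) c w := by
  funext e
  unfold updEnv updBcast
  by_cases he : e = c <;> simp [he]

theorem updL_sigma_updEnv (Γ : ChanEnv V) (c : Chan) (n : ℕ) (v : V) :
    updL errv δ .sigma (updEnv Γ c (n, v)) = updEnv (updL errv δ .sigma Γ) c (n - 1, v) := by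
  funext e
  unfold updEnv updL
  by_cases he : e = c <;> simp [he]

theorem Step.wf_updL (hδ : ∀ v : V, 1 ≤ δ v) {Γ : ChanEnv V} {W W' : Sys V} {lam : Label V}
    (h : Step errv δ Γ W lam W') (hwf : WF Γ W) : WF (updL errv δ lam Γ) W' := by
  induction h with
  | snd _ | timeNil | sleep | endRcv _ _ | timeout _ | tauStep | thenB _ | elseB _
  | sumTime _ _ _ _ => exact .wfProc _
  | rcv h0 => exact .wfActive _ (updBcast_self_fst_pos_of_idle _ (hδ _) h0)
  | rcvIgn _ => exact hwf.mono (envLE_updBcast (errv := errv) (δ := δ) _ _ _)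
  | actRcv h1 => exact .wfActive _ (by simp only [updL]; omega)
  | rcvLate h0 => exact .wfActive _ h0
  | sync _ _ ih1 ih2 | syncR _ _ ih1 ih2 | rcvPar _ _ ih1 ih2 | timePar _ _ ih1 ih2 =>
    cases hwf with
    | wfPar hw1 hw2 => exact .wfPar (ih1 hw1) (ih2 hw2)
  | tauParL _ ih =>
    cases hwf with
    | wfPar hw1 hw2 => exact .wfPar (ih hw1) hw2
  | tauParR _ ih =>
    cases hwf with
    | wfPar hw1 hw2 => exact .wfPar hw1 (ih hw2)
  | recS _ ih | sumL _ _ ih | sumR _ _ ih | sumRcvL _ _ ih | sumRcvR _ _ ih => exact ih (.wfProc _)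
  | resI _ ih =>
    cases hwf with
    | wfRes hw => exact .wfRes (by rw [updL, updEnv_updBcast_self]; exact ih hw)
  | resV _ hc hσ ih =>
    cases hwf with
    | wfRes hw => exact .wfRes (by rw [← updL_updEnv_of_not_usesChan _ _ hc hσ]; exact ih hw)
  | resT _ ih =>
    cases hwf with
    | wfRes hw => exact .wfRes (by rw [← updL_sigma_updEnv]; exact ih hw)

theorem Red.exists_step {C C' : Config V} (h : Red errv δ C C') :
    ∃ lam, Step errv δ C.1 C.2 lam C'.2 ∧ C'.1 = updL errv δ lam C.1 := by
  rcases h with (⟨hs, he⟩ | ⟨c, v, hs, he⟩) | ⟨hs, he⟩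
  exacts [⟨_, hs, he⟩, ⟨_, hs, he⟩, ⟨_, hs, he⟩]

theorem wf_preserved_by_reduction_general {V : Type} (errv : V) (δ : V → ℕ) (hδ : ∀ v : V, 1 ≤ δ v)
    (C C' : Config V) (hwf : WF C.1 C.2)
    (h : Red errv δ C C') :
    WF C'.1 C'.2 := by
  obtain ⟨lam, hs, he⟩ := h.exists_step
  rw [he]
  exact hs.wf_updL hδ hwf

/-- Well-formedness is preserved by reduction (Lemma 4.8 of the paper). -/
theorem wf_preserved_by_reduction {V : Type} (errv : V) (δ : V → ℕ) (hδ : ∀ v : V, 1 ≤ δ v)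
    (C C' : Config V) (hp : C.2.proper) (hwf : WF C.1 C.2)
    (h : Red errv δ C C') :
    WF C'.1 C'.2 :=
  wf_preserved_by_reduction_general errv δ hδ C C' hwf h

end CCCP
end

section
/- Detecting inputs: for every well-formed configuration Γ ▷ W, channel c and closed value v, with fresh channels eureka and fail (occurring free neither in W nor exposed in Γ) and values ok, no of transmission time 1: Γ ▷ W ⟹c?v⟹ Γ' ▷ W' if and only if Γ ▷ (W | T_{c?v}) ⟶_i^* Γ' ▷ (W' | T✓_{c?v}), where T_{c?v} = c!⟨v⟩.eureka!⟨ok⟩ + fail!⟨no⟩ and T✓_{c?v} = σ^{δ_v}.eureka!⟨ok⟩. -/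
/- A formalization of the Calculus of Collision-prone Communicating Processes (CCCP). -/

namespace CCCP

variable {V : Type}

/-- The test detecting the input action c?v:
T_{c?v} = c!⟨v⟩.eureka!⟨ok⟩ + fail!⟨no⟩. -/
def Tinp {V : Type} (c : Chan) (v : V) (eureka fail : Chan) (ok no : V) : Sys V :=
  .proc (.sum (.broadcast c (.val v) (.broadcast eureka (.val ok) .nil))
              (.broadcast fail (.val no) .nil))

/-- The successful state of the test for c?v: T✓_{c?v} = σ^{δ_v}.eureka!⟨ok⟩. -/
def TinpOK {V : Type} (δ : V → ℕ) (v : V) (eureka : Chan) (ok : V) : Sys V :=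
  .proc (Proc.sigmaIter (δ v) (.broadcast eureka (.val ok) .nil))


section AuxDetect

variable {V : Type} {errv : V} {δ : V → ℕ}

lemma hasRcv_sigmaIter {d : Chan} {n : ℕ} {P : Proc V} (hP : P.hasRcv d = false) :
    (Proc.sigmaIter n P).hasRcv d = false := by
  cases n <;> simp [Proc.sigmaIter, Proc.hasRcv, hP]

/-- Lifting internal extensional moves to instantaneous reductions in parallel
with a receiver-free test. -/
lemma tauStar_par {T0 : Sys V} (hT : ∀ d, T0.hasRcv d = false) :
    ∀ {C C' : Config V}, TauStar errv δ C C' →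
      RedIStar errv δ (C.1, .par C.2 T0) (C'.1, .par C'.2 T0) := by
  intro C C' h
  induction h with
  | refl => exact Relation.ReflTransGen.refl
  | tail hab hbc ih =>
    refine ih.tail ?_
    cases hbc with
    | eshh hs =>
        exact Or.inr ⟨_, _, Step.sync hs (Step.rcvIgn (by simp [Isrcv, hT])), rfl⟩
    | etau hs => exact Or.inl ⟨Step.tauParL hs, rfl⟩

/-- Once the test has committed (it is a σ-prefixed process), instantaneous
reductions only come from the tested system. -/
lemma redIStar_sigma {S : Proc V} :
    ∀ {C : Config V} {Γ2 : ChanEnv V} {Z : Sys V},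
      RedIStar errv δ C (Γ2, Z) →
      ∀ Γ1 W1, C = (Γ1, .par W1 (.proc (.sigma S))) →
      ∃ W2, Z = .par W2 (.proc (.sigma S)) ∧ TauStar errv δ (Γ1, W1) (Γ2, W2) := by
  intro C Γ2 Z h
  induction h using Relation.ReflTransGen.head_induction_on with
  | refl =>
    intro Γ1 W1 hC
    injection hC with h1 h2
    subst h1; subst h2
    exact ⟨W1, rfl, Relation.ReflTransGen.refl⟩
  | @head a b hab hbc ih =>
    intro Γ1 W1 hC
    subst hC
    obtain ⟨Γb, Zb⟩ := b
    rcases hab with ⟨hstep, henv⟩ | ⟨d, w, hstep, henv⟩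
    · dsimp at hstep henv
      subst henv
      cases hstep with
      | tauParL hs =>
          obtain ⟨W2, hZ, htau⟩ := ih _ _ rfl
          exact ⟨W2, hZ, htau.head (EStep.etau hs)⟩
      | tauParR hs => cases hs
    · dsimp at hstep henv
      subst henv
      cases hstep with
      | sync hl hr =>
          cases hr with
          | rcvIgn _ =>
              obtain ⟨W2, hZ, htau⟩ := ih _ _ rfl
              exact ⟨W2, hZ, htau.head (EStep.eshh hl)⟩
      | syncR hl hr => cases hr

/-- Tracking the test through a sequence of instantaneous reductions. -/
lemma redIStar_test {c1 c2 : Chan} {v1 v2 : V} {K1 K2 : Proc V}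
    (h1 : 1 ≤ δ v1) (h2 : 1 ≤ δ v2) :
    ∀ {C : Config V} {Γ2 : ChanEnv V} {Z : Sys V},
      RedIStar errv δ C (Γ2, Z) →
      ∀ Γ1 W1, C = (Γ1, .par W1 (.proc (.sum (.broadcast c1 (.val v1) K1)
                                             (.broadcast c2 (.val v2) K2)))) →
      (∃ W2, Z = .par W2 (.proc (.sum (.broadcast c1 (.val v1) K1)
                                      (.broadcast c2 (.val v2) K2))) ∧
         TauStar errv δ (Γ1, W1) (Γ2, W2)) ∨
      (∃ Γm Wm Wm' W2, Z = .par W2 (.proc (Proc.sigmaIter (δ v1) K1)) ∧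
         TauStar errv δ (Γ1, W1) (Γm, Wm) ∧
         Step errv δ Γm Wm (.inp c1 v1) Wm' ∧
         TauStar errv δ (updBcast errv δ Γm c1 v1, Wm') (Γ2, W2)) ∨
      (∃ W2, Z = .par W2 (.proc (Proc.sigmaIter (δ v2) K2))) := by
  obtain ⟨m1, hm1⟩ : ∃ m, δ v1 = m + 1 := ⟨δ v1 - 1, by omega⟩
  obtain ⟨m2, hm2⟩ : ∃ m, δ v2 = m + 1 := ⟨δ v2 - 1, by omega⟩
  intro C Γ2 Z h
  induction h using Relation.ReflTransGen.head_induction_on with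
  | refl =>
    intro Γ1 W1 hC
    injection hC with ha hb
    subst ha; subst hb
    exact Or.inl ⟨W1, rfl, Relation.ReflTransGen.refl⟩
  | @head a b hab hbc ih =>
    intro Γ1 W1 hC
    subst hC
    obtain ⟨Γb, Zb⟩ := b
    rcases hab with ⟨hstep, henv⟩ | ⟨d, w, hstep, henv⟩
    · dsimp at hstep henv
      subst henv
      cases hstep with
      | tauParL hs =>
          rcases ih _ _ rfl with ⟨W2, hZ, htau⟩ | ⟨Γm, Wm, Wm', W2, hZ, ht1, hmid, ht2⟩ | hf
          · exact Or.inl ⟨W2, hZ, htau.head (EStep.etau hs)⟩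
          · exact Or.inr (Or.inl ⟨Γm, Wm, Wm', W2, hZ, ht1.head (EStep.etau hs), hmid, ht2⟩)
          · exact Or.inr (Or.inr hf)
      | tauParR hs =>
          cases hs with
          | sumL hs' _ => cases hs'
          | sumR hs' _ => cases hs'
    · dsimp at hstep henv
      subst henv
      cases hstep with
      | sync hl hr =>
          cases hr with
          | rcvIgn _ =>
              rcases ih _ _ rfl with ⟨W2, hZ, htau⟩ | ⟨Γm, Wm, Wm', W2, hZ, ht1, hmid, ht2⟩ | hf
              · exact Or.inl ⟨W2, hZ, htau.head (EStep.eshh hl)⟩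
              · exact Or.inr (Or.inl ⟨Γm, Wm, Wm', W2, hZ, ht1.head (EStep.eshh hl), hmid, ht2⟩)
              · exact Or.inr (Or.inr hf)
          | sumRcvL _ hd => simp [Isrcv, Proc.hasRcv, Sys.hasRcv] at hd
          | sumRcvR _ hd => simp [Isrcv, Proc.hasRcv, Sys.hasRcv] at hd
          | sumL _ hside => simp at hside
          | sumR _ hside => simp at hside
      | syncR hl hr =>
          cases hr with
          | sumL hs' _ =>
              cases hs' with
              | snd he =>
                  simp [Exp.eval] at he
                  subst he
                  have := redIStar_sigma (S := Proc.sigmaIter m1 K1) hbc _ _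
                    (by rw [hm1]; rfl)
                  obtain ⟨W2, hZ, htau⟩ := this
                  refine Or.inr (Or.inl ⟨Γ1, W1, _, W2, ?_, Relation.ReflTransGen.refl,
                    hl, htau⟩)
                  rw [hm1]; exact hZ
          | sumR hs' _ =>
              cases hs' with
              | snd he =>
                  simp [Exp.eval] at he
                  subst he
                  have := redIStar_sigma (S := Proc.sigmaIter m2 K2) hbc _ _
                    (by rw [hm2]; rfl)
                  obtain ⟨W2, hZ, htau⟩ := this
                  refine Or.inr (Or.inr ⟨W2, ?_⟩)
                  rw [hm2]; exact hZ

end AuxDetect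

/-- Detecting inputs (Proposition 4.18 of the paper). -/
theorem detecting_inputs {V : Type} (errv : V) (δ : V → ℕ) (hδ : ∀ v : V, 1 ≤ δ v)
    (Γ : ChanEnv V) (W : Sys V) (hp : W.proper) (hwf : WF Γ W)
    (c : Chan) (v : V) (eureka fail : Chan) (ok no : V)
    (hok : δ ok = 1) (hno : δ no = 1)
    (hef : eureka ≠ fail) (hec : eureka ≠ c) (hfc : fail ≠ c)
    (hWe : W.freeChan eureka = false) (hWf : W.freeChan fail = false)
    (hGe : (Γ eureka).1 = 0) (hGf : (Γ fail).1 = 0) :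
    ∀ (Γ' : ChanEnv V) (W' : Sys V),
      WStep errv δ (Γ, W) (.inp c v) (Γ', W') ↔
      RedIStar errv δ (Γ, .par W (Tinp c v eureka fail ok no))
                      (Γ', .par W' (TinpOK δ v eureka ok)) := by
  intro Γ' W'
  constructor
  · rintro ⟨⟨Γ1, W1⟩, C2, ht1, hmid, ht2⟩
    cases hmid with
    | einp hs =>
      have step1 : RedIStar errv δ (Γ, .par W (Tinp c v eureka fail ok no))
          (Γ1, .par W1 (Tinp c v eureka fail ok no)) :=
        tauStar_par (fun d => by simp [Tinp, Sys.hasRcv, Proc.hasRcv]) ht1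
      have step2 : RedI errv δ (Γ1, .par W1 (Tinp c v eureka fail ok no))
          (updBcast errv δ Γ1 c v, .par _ (TinpOK δ v eureka ok)) :=
        Or.inr ⟨c, v, Step.syncR hs (Step.sumL (Step.snd rfl) (Or.inr ⟨c, v, rfl⟩)),
          rfl⟩
      have step3 : RedIStar errv δ
          (updBcast errv δ Γ1 c v, .par _ (TinpOK δ v eureka ok))
          (Γ', .par W' (TinpOK δ v eureka ok)) :=
        tauStar_par (fun d => by
          simp only [TinpOK, Sys.hasRcv]
          exact hasRcv_sigmaIter (by simp [Proc.hasRcv])) ht2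
      exact (step1.tail step2).trans step3
  · intro h
    rcases redIStar_test (v1 := v) (v2 := no)
        (K1 := .broadcast eureka (.val ok) .nil) (K2 := .nil)
        (hδ v) (by omega) h Γ W rfl with
      ⟨W2, hZ, _⟩ | ⟨Γm, Wm, Wm', W2, hZ, ht1, hmid, ht2⟩ | ⟨W2, hZ⟩
    · exfalso
      obtain ⟨m, hm⟩ : ∃ m, δ v = m + 1 := ⟨δ v - 1, by have := hδ v; omega⟩
      rw [TinpOK, hm] at hZ
      simp [Proc.sigmaIter] at hZ
    · rw [TinpOK] at hZ
      injection hZ with hZ1 hZ2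
      subst hZ1
      exact ⟨(Γm, Wm), _, ht1, EStep.einp hmid, ht2⟩
    · exfalso
      obtain ⟨m, hm⟩ : ∃ m, δ v = m + 1 := ⟨δ v - 1, by have := hδ v; omega⟩
      rw [TinpOK, hm, hno] at hZ
      simp [Proc.sigmaIter] at hZ
      rcases hZ with ⟨-, hZ⟩
      cases m <;> simp [Proc.sigmaIter] at hZ


end CCCP
end

section
/- Detecting exposure checks: for every well-formed configuration Γ ▷ W and channel c, with fresh channels eureka and fail (occurring free neither in W nor exposed in Γ) and values ok, no of transmission time 1: Γ ▷ W ⟹ι(c)⟹ Γ' ▷ W' if and only if Γ ▷ (W | T_{ι(c)}) ⟶_i^* Γ' ▷ (W' | T✓_{ι(c)}), where T_{ι(c)} = ([exp(c)] nil, eureka!⟨ok⟩) + fail!⟨no⟩ and T✓_{ι(c)} = σ.eureka!⟨ok⟩. -/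
/- A formalization of the Calculus of Collision-prone Communicating Processes (CCCP). -/

namespace CCCP

variable {V : Type}

/-- The test detecting the action ι(c):
T_{ι(c)} = ([exp(c)] nil, eureka!⟨ok⟩) + fail!⟨no⟩. -/
def Tidle {V : Type} (c eureka fail : Chan) (ok no : V) : Sys V :=
  .proc (.sum (.mtch (.exposed c) .nil (.broadcast eureka (.val ok) .nil))
              (.broadcast fail (.val no) .nil))

/-- The successful state of the test for ι(c): T✓_{ι(c)} = σ.eureka!⟨ok⟩. -/
def TidleOK {V : Type} (eureka : Chan) (ok : V) : Sys V :=
  .proc (.sigma (.broadcast eureka (.val ok) .nil))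

/-! Instantaneous reductions never let time pass, so once the test has committed to a branch its
σ-prefixed residual (`σ.nil`, `σ^(δ no).nil` or `σ.eureka!⟨ok⟩`) is frozen, and meanwhile it
ignores every broadcast of the tested system. The only way to reach `σ.eureka!⟨ok⟩` is the
else-branch of the exposure check, which is available exactly when `c` is free. -/

section DetectingExposure

variable {errv : V} {δ : V → ℕ}

lemma estep_tauA_eq_redI :
    (fun C C' => EStep errv δ C .tauA C') = RedI errv δ := by
  ext ⟨Γ, W⟩ ⟨Γ', W'⟩
  constructor
  · intro h
    cases h with
    | eshh h => exact Or.inr ⟨_, _, h, rfl⟩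
    | etau h => exact Or.inl ⟨h, rfl⟩
  · rintro (⟨h, rfl⟩ | ⟨d, v, h, rfl⟩)
    · exact .etau h
    · exact .eshh h

lemma tauStar_eq_redIStar : TauStar errv δ = RedIStar errv δ := by
  rw [TauStar, RedIStar, estep_tauA_eq_redI]

lemma RedI.par_right {T : Sys V} (hT : ∀ d, T.hasRcv d = false) {C C' : Config V}
    (h : RedI errv δ C C') : RedI errv δ (C.1, .par C.2 T) (C'.1, .par C'.2 T) := by
  rcases h with ⟨hs, hΓ⟩ | ⟨d, v, hs, hΓ⟩
  · exact Or.inl ⟨.tauParL hs, hΓ⟩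
  · exact Or.inr ⟨d, v, .sync hs (.rcvIgn fun hr => by simp [Isrcv, hT] at hr), hΓ⟩

lemma RedIStar.par_right {T : Sys V} (hT : ∀ d, T.hasRcv d = false) {C C' : Config V}
    (h : RedIStar errv δ C C') : RedIStar errv δ (C.1, .par C.2 T) (C'.1, .par C'.2 T) :=
  Relation.ReflTransGen.lift (fun C : Config V => (C.1, Sys.par C.2 T))
    (fun _ _ => RedI.par_right hT) _ _ h

def Inert (errv : V) (δ : V → ℕ) (T : Sys V) : Prop :=
  ∀ Γ lam T', Step errv δ Γ T lam T' → lam = .sigma ∨ (∃ d v, lam = .inp d v) ∧ T' = T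

lemma inert_nil : Inert errv δ (.proc .nil) := by
  rintro Γ lam T' (_ | _ | _ | _ | _ | _ | _ | _ | _ | _)
  all_goals first | exact Or.inl rfl | exact Or.inr ⟨⟨_, _, rfl⟩, rfl⟩

lemma inert_sigma (P : Proc V) : Inert errv δ (.proc (.sigma P)) := by
  rintro Γ lam T' (_ | _ | _ | _ | _ | _ | _ | _ | _ | _)
  all_goals first | exact Or.inl rfl | exact Or.inr ⟨⟨_, _, rfl⟩, rfl⟩

lemma inert_sigmaIter_nil : ∀ n, Inert errv δ (.proc (Proc.sigmaIter n .nil))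
  | 0 => inert_nil
  | _ + 1 => inert_sigma _

lemma Inert.redI_par {T W : Sys V} (hT : Inert errv δ T) {Γ Γ' : ChanEnv V} {U : Sys V}
    (h : RedI errv δ (Γ, .par W T) (Γ', U)) :
    ∃ W', U = .par W' T ∧ RedI errv δ (Γ, W) (Γ', W') := by
  rcases h with ⟨hs, hΓ⟩ | ⟨d, v, hs, hΓ⟩
  · cases hs with
    | tauParL h1 => exact ⟨_, rfl, Or.inl ⟨h1, hΓ⟩⟩
    | tauParR h2 => rcases hT _ _ _ h2 with h | ⟨⟨_, _, h⟩, -⟩ <;> cases h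
  · cases hs with
    | sync h1 h2 =>
      rcases hT _ _ _ h2 with h | ⟨-, rfl⟩
      · cases h
      exact ⟨_, rfl, Or.inr ⟨d, v, h1, hΓ⟩⟩
    | syncR h1 h2 => rcases hT _ _ _ h2 with h | ⟨⟨_, _, h⟩, -⟩ <;> cases h

lemma Inert.redIStar_par {T W : Sys V} (hT : Inert errv δ T) {Γ : ChanEnv V} {C : Config V}
    (h : RedIStar errv δ (Γ, .par W T) C) :
    ∃ W', C.2 = .par W' T ∧ RedIStar errv δ (Γ, W) (C.1, W') := by
  induction h with
  | refl => exact ⟨W, rfl, .refl⟩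
  | @tail C₁ C₂ _ hstep ih =>
    obtain ⟨W₁, hC₁, hW₁⟩ := ih
    obtain ⟨Γ₁, U₁⟩ := C₁
    obtain ⟨Γ₂, U₂⟩ := C₂
    subst hC₁
    obtain ⟨W₂, rfl, hW₂⟩ := hT.redI_par hstep
    exact ⟨W₂, rfl, hW₁.tail hW₂⟩

lemma Inert.redIStar_par_par {T T' W W' : Sys V} (hT : Inert errv δ T) {Γ Γ' : ChanEnv V}
    (h : RedIStar errv δ (Γ, .par W T) (Γ', .par W' T')) :
    T' = T ∧ RedIStar errv δ (Γ, W) (Γ', W') := by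
  obtain ⟨W'', heq, hW⟩ := hT.redIStar_par h
  cases heq
  exact ⟨rfl, hW⟩

lemma proc_sigmaIter_nil_ne_sigma_broadcast (n : ℕ) (d : Chan) (e : Exp V) (P : Proc V) :
    Proc.sigmaIter n .nil ≠ .sigma (.broadcast d e P) := by
  rcases n with _ | _ | n <;> simp [Proc.sigmaIter]

lemma step_tidle {Γ : ChanEnv V} {c e f : Chan} {ok no : V} {lam : Label V} {T' : Sys V}
    (h : Step errv δ Γ (Tidle c e f ok no) lam T') :
    lam = .sigma ∨
    (∃ d v, lam = .inp d v) ∧ T' = Tidle c e f ok no ∨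
    lam = .tau ∧ (Γ c).1 = 0 ∧ T' = TidleOK e ok ∨
    Inert errv δ T' ∧ T' ≠ TidleOK e ok := by
  rw [Tidle] at h
  cases h with
  | sumL h hlam =>
    cases h with
    | thenB => exact .inr (.inr (.inr ⟨inert_sigma _, by simp [TidleOK]⟩))
    | elseB hb =>
      cases hb with
      | expF hc => exact .inr (.inr (.inl ⟨rfl, hc, rfl⟩))
    | rcvIgn => simp at hlam
  | sumR h hlam =>
    cases h with
    | snd => exact .inr (.inr (.inr ⟨inert_sigmaIter_nil _, by
        simpa [TidleOK] using proc_sigmaIter_nil_ne_sigma_broadcast _ _ _ _⟩))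
    | rcvIgn => simp at hlam
  | sumTime => exact .inl rfl
  | sumRcvL _ hr => simp [Isrcv, Sys.hasRcv, Proc.hasRcv] at hr
  | sumRcvR _ hr => simp [Isrcv, Sys.hasRcv, Proc.hasRcv] at hr
  | rcvIgn => exact .inr (.inl ⟨⟨_, _, rfl⟩, rfl⟩)

lemma exists_free_of_redIStar_par_tidle {Γ Γ' : ChanEnv V} {W W' : Sys V} {c e f : Chan}
    {ok no : V}
    (h : RedIStar errv δ (Γ, .par W (Tidle c e f ok no)) (Γ', .par W' (TidleOK e ok))) :
    ∃ Γ₁ W₁, RedIStar errv δ (Γ, W) (Γ₁, W₁) ∧ (Γ₁ c).1 = 0 ∧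
      RedIStar errv δ (Γ₁, W₁) (Γ', W') := by
  generalize hC : (Γ, Sys.par W (Tidle c e f ok no)) = C at h
  induction h using Relation.ReflTransGen.head_induction_on generalizing Γ W with
  | refl => simp [Tidle, TidleOK] at hC
  | @head _ C₂ hstep hrest ih =>
    subst hC
    obtain ⟨Γ₂, U₂⟩ := C₂
    have stuck {T : Sys V} (hT : Inert errv δ T) (hne : T ≠ TidleOK e ok) {W₂ : Sys V}
        (hU : U₂ = .par W₂ T) : False := by
      subst hU
      exact hne (hT.redIStar_par_par hrest).1.symm
    have advance {W₂ : Sys V} (hW : RedI errv δ (Γ, W) (Γ₂, W₂))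
        (hU : U₂ = .par W₂ (Tidle c e f ok no)) :
        ∃ Γ₁ W₁, RedIStar errv δ (Γ, W) (Γ₁, W₁) ∧ (Γ₁ c).1 = 0 ∧
          RedIStar errv δ (Γ₁, W₁) (Γ', W') := by
      obtain ⟨Γ₁, W₁, h₁, hc, h₂⟩ := ih (Γ := Γ₂) (W := W₂) (by rw [hU])
      exact ⟨Γ₁, W₁, .head hW h₁, hc, h₂⟩
    rcases hstep with ⟨hs, hΓ⟩ | ⟨d, v, hs, hΓ⟩
    · cases hs with
      | tauParL h₁ => exact advance (Or.inl ⟨h₁, hΓ⟩) rfl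
      | tauParR h₂ =>
        rcases step_tidle h₂ with h | ⟨⟨_, _, h⟩, -⟩ | ⟨-, hc, rfl⟩ | ⟨hT, hne⟩
        iterate 2 · cases h
        · obtain rfl : Γ₂ = Γ := hΓ
          exact ⟨Γ₂, W, .refl, hc, ((inert_sigma _).redIStar_par_par hrest).2⟩
        · exact (stuck hT hne rfl).elim
    · cases hs with
      | sync h₁ h₂ =>
        rcases step_tidle h₂ with h | ⟨-, rfl⟩ | ⟨h, -⟩ | ⟨hT, hne⟩
        · cases h
        · exact advance (Or.inr ⟨d, v, h₁, hΓ⟩) rfl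
        · cases h
        · exact (stuck hT hne rfl).elim
      | syncR h₁ h₂ =>
        rcases step_tidle h₂ with h | ⟨⟨_, _, h⟩, -⟩ | ⟨h, -⟩ | ⟨hT, hne⟩
        iterate 3 · cases h
        exact (stuck hT hne rfl).elim

end DetectingExposure

theorem detecting_exposure_checks_general {V : Type} (errv : V) (δ : V → ℕ)
    (Γ : ChanEnv V) (W : Sys V)
    (c eureka fail : Chan) (ok no : V) :
    ∀ (Γ' : ChanEnv V) (W' : Sys V),
      WStep errv δ (Γ, W) (.idle c) (Γ', W') ↔
      RedIStar errv δ (Γ, .par W (Tidle c eureka fail ok no))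
                      (Γ', .par W' (TidleOK eureka ok)) := by
  intro Γ' W'
  rw [WStep, tauStar_eq_redIStar]
  constructor
  · rintro ⟨⟨Γ₁, W₁⟩, _, h₁, hidle, h₂⟩
    cases hidle with | eidle hc => ?_
    have takeElse : RedI errv δ (Γ₁, .par W₁ (Tidle c eureka fail ok no))
        (Γ₁, .par W₁ (TidleOK eureka ok)) :=
      Or.inl ⟨.tauParR (.sumL (.elseB (.expF hc)) (.inl rfl)), rfl⟩
    exact (h₁.par_right fun _ => rfl).trans (.head takeElse (h₂.par_right fun _ => rfl))
  · intro h
    obtain ⟨Γ₁, W₁, h₁, hc, h₂⟩ := exists_free_of_redIStar_par_tidle h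
    exact ⟨(Γ₁, W₁), (Γ₁, W₁), h₁, .eidle hc, h₂⟩

/-- Detecting exposure checks (Proposition 4.19 of the paper). -/
theorem detecting_exposure_checks {V : Type} (errv : V) (δ : V → ℕ) (hδ : ∀ v : V, 1 ≤ δ v)
    (Γ : ChanEnv V) (W : Sys V) (hp : W.proper) (hwf : WF Γ W)
    (c eureka fail : Chan) (ok no : V)
    (hok : δ ok = 1) (hno : δ no = 1)
    (hef : eureka ≠ fail) (hec : eureka ≠ c) (hfc : fail ≠ c)
    (hWe : W.freeChan eureka = false) (hWf : W.freeChan fail = false)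
    (hGe : (Γ eureka).1 = 0) (hGf : (Γ fail).1 = 0) :
    ∀ (Γ' : ChanEnv V) (W' : Sys V),
      WStep errv δ (Γ, W) (.idle c) (Γ', W') ↔
      RedIStar errv δ (Γ, .par W (Tidle c eureka fail ok no))
                      (Γ', .par W' (TidleOK eureka ok)) :=
  detecting_exposure_checks_general errv δ Γ W c eureka fail ok no

end CCCP
end
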